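/- arXiv:1711.08201 — 2 statements merged into one kernel-verified Lean document; each statement's English description precedes it below -/
import Mathlib

section
/- Let R be a discrete valuation ring with maximal ideal (π), residue field F = R/(π), and fraction field K. Let G be a finite group acting linearly on R[x_1,…,x_n], and let f_1,…,f_n ∈ R[x_1,…,x_n]^G be algebraically independent homogeneous invariants such that K[x_1,…,x_n]^G = K[f_1,…,f_n]. Then R[x_1,…,x_n]^G = R[f_1,…,f_n] if and only if the images of f_1,…,f_n in F[x_1,…,x_n] are algebraically independent over F. -/
open MvPolynomial

/-- The linear-substitution action of an invertible matrix `M` on polynomials: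
`(M • f)(a) = f (M⁻¹ • a)`, i.e. `X i ↦ ∑ j (M⁻¹) i j • X j`. -/
noncomputable def gAct {R : Type*} [CommRing R] {n : ℕ}
    (M : Matrix.GeneralLinearGroup (Fin n) R) :
    MvPolynomial (Fin n) R →ₐ[R] MvPolynomial (Fin n) R :=
  aeval fun i => ∑ j, C ((M⁻¹ : Matrix.GeneralLinearGroup (Fin n) R) i j) * X j

/-- The ring of invariants `R[x_1,…,x_n]^G` of the representation `ρ : G →* GL_n(R)`. -/
noncomputable def invariantRing {R : Type*} [CommRing R] {n : ℕ} {G : Type*} [Group G]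
    (ρ : G →* Matrix.GeneralLinearGroup (Fin n) R) : Subalgebra R (MvPolynomial (Fin n) R) :=
  ⨅ σ : G, AlgHom.equalizer (gAct (ρ σ)) (AlgHom.id R _)

/-- A regular local ring: Noetherian, local, and the Krull dimension equals the
dimension of the cotangent space. -/
def IsRegularLocalRingP (A : Type*) [CommRing A] : Prop :=
  IsNoetherianRing A ∧ ∃ h : IsLocalRing A,
    haveI := h
    ringKrullDim A =
      Module.finrank (IsLocalRing.ResidueField A) (IsLocalRing.CotangentSpace A)

/-- A regular ring: Noetherian, and all localizations at primes are regular local rings. -/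
def IsRegularRingP (A : Type*) [CommRing A] : Prop :=
  IsNoetherianRing A ∧ ∀ (p : Ideal A) (hp : p.IsPrime),
    haveI := hp
    IsRegularLocalRingP (Localization.AtPrime p)

open scoped TensorProduct in
/-- The tensor product `B_{I_1}R ⊗_R ⋯ ⊗_R B_{I_n}R` of the blowup (Rees) algebras of the
ideals `I i`. -/
noncomputable def BlowupTensor (R : Type*) [CommRing R] {n : ℕ} (I : Fin n → Ideal R) : Type _ :=
  ⨂[R] i : Fin n, ↥(reesAlgebra (I i))

noncomputable instance (R : Type*) [CommRing R] {n : ℕ} (I : Fin n → Ideal R) :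
    CommRing (BlowupTensor R I) := by unfold BlowupTensor; infer_instance

noncomputable instance (R : Type*) [CommRing R] {n : ℕ} (I : Fin n → Ideal R) :
    Algebra R (BlowupTensor R I) := by unfold BlowupTensor; infer_instance

/-- A pseudoreflection: a nonidentity invertible matrix fixing a hyperplane pointwise,
i.e. `g - 1` has rank at most one. -/
def IsPseudoreflection {n : ℕ} {K : Type*} [Field K]
    (g : Matrix.GeneralLinearGroup (Fin n) K) : Prop :=
  g ≠ 1 ∧ Matrix.rank ((g : Matrix (Fin n) (Fin n) K) - 1) ≤ 1

/-!
Let `S = R[x]^G` and `A = R[f] ⊆ S`. Since `K[x]^G = K[f]`, clearing denominators puts `b • h`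
in `A` for every `h ∈ S` and some `b ≠ 0`; as `S` is `π`-saturated (`π h ∈ S ⇒ h ∈ S`), `S = A`
holds iff `A` is `π`-saturated. A relation `Q̄(f̄) = 0` over `F` lifts to `Q(f) = π h`, and by the
independence of `f` over `R`, `h ∈ A` exactly when `π ∣ Q`; so `A` is saturated iff `f̄` are
independent.
-/

section Invariants

variable {R S : Type*} [CommRing R] [CommRing S] {n : ℕ} {G : Type*} [Group G]

theorem map_aeval_eq_aeval_map {σ ι : Type*} (φ : R →+* S) (g : ι → MvPolynomial σ R)
    (Q : MvPolynomial ι R) :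
    map φ (aeval g Q) = aeval (fun i => map φ (g i)) (map φ Q) := by
  rw [map_aeval, aeval_def, eval₂_map, coe_eval₂Hom, algebraMap_eq, algebraMap_eq, map_comp_C]

theorem mem_invariantRing_iff (ρ : G →* Matrix.GeneralLinearGroup (Fin n) R)
    (p : MvPolynomial (Fin n) R) :
    p ∈ invariantRing ρ ↔ ∀ g : G, gAct (ρ g) p = p := by
  simp [invariantRing, Algebra.mem_iInf, AlgHom.mem_equalizer]

theorem map_gAct (φ : R →+* S) (M : Matrix.GeneralLinearGroup (Fin n) R)
    (p : MvPolynomial (Fin n) R) :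
    map φ (gAct M p) = gAct (Matrix.GeneralLinearGroup.map φ M) (map φ p) := by
  simp only [gAct, map_aeval_eq_aeval_map, map_sum, map_mul, map_C, map_X,
    ← Matrix.GeneralLinearGroup.map_inv, Matrix.GeneralLinearGroup.map_apply]

theorem map_mem_invariantRing (φ : R →+* S) {ρ : G →* Matrix.GeneralLinearGroup (Fin n) R}
    {p : MvPolynomial (Fin n) R} (hp : p ∈ invariantRing ρ) :
    map φ p ∈ invariantRing ((Matrix.GeneralLinearGroup.map φ).comp ρ) := by
  rw [mem_invariantRing_iff] at hp ⊢
  intro g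
  rw [MonoidHom.comp_apply, ← map_gAct, hp g]

end Invariants

section Saturation

variable {R : Type*} [CommRing R] {σ : Type*}

def IsSaturatedBy (π : R) (T : Subalgebra R (MvPolynomial σ R)) : Prop :=
  ∀ h, C π * h ∈ T → h ∈ T

theorem invariantRing_isSaturatedBy [IsDomain R] {n : ℕ} {G : Type*} [Group G]
    (ρ : G →* Matrix.GeneralLinearGroup (Fin n) R) {π : R} (hπ : π ≠ 0) :
    IsSaturatedBy π (invariantRing ρ) := by
  intro h hh
  rw [mem_invariantRing_iff] at hh ⊢
  intro g
  have hCπ : (C π : MvPolynomial (Fin n) R) ≠ 0 := C_ne_zero.mpr hπ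
  apply mul_left_cancel₀ hCπ
  rw [← hh g, map_mul, ← algebraMap_eq, AlgHom.commutes]

theorem IsSaturatedBy.mem_of_C_mul_mem [IsDomain R] [IsDiscreteValuationRing R]
    {π : R} {T : Subalgebra R (MvPolynomial σ R)} (hT : IsSaturatedBy π T)
    (hπ : Irreducible π) {b : R} (hb : b ≠ 0) {h : MvPolynomial σ R} (hbh : C b * h ∈ T) :
    h ∈ T := by
  obtain ⟨m, u, rfl⟩ := IsDiscreteValuationRing.eq_unit_mul_pow_irreducible hb hπ
  have hpow : C (π ^ m) * h ∈ T := by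
    have hu : C ((u⁻¹ : Rˣ) : R) ∈ T := by rw [← algebraMap_eq]; exact T.algebraMap_mem _
    convert T.mul_mem hu hbh using 1
    rw [← mul_assoc, ← C_mul, ← mul_assoc, Units.inv_mul, one_mul]
  clear hb hbh
  induction m with
  | zero => simpa using hpow
  | succ m ih => exact ih (hT _ (by rwa [pow_succ', C_mul, mul_assoc] at hpow))

theorem isSaturatedBy_adjoin_iff {k ι : Type*} [IsDomain R] [CommRing k]
    {φ : R →+* k} (hφ : Function.Surjective φ) {π : R} (hker : ∀ r, φ r = 0 ↔ π ∣ r)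
    (hπ : π ≠ 0) {f : ι → MvPolynomial σ R} (hf : AlgebraicIndependent R f) :
    IsSaturatedBy π (Algebra.adjoin R (Set.range f)) ↔
      AlgebraicIndependent k (fun i => map φ (f i)) := by
  have hCπ : (C π : MvPolynomial σ R) ≠ 0 := C_ne_zero.mpr hπ
  have haeval_C (Q : MvPolynomial ι R) : aeval f (C π * Q) = C π * aeval f Q := by
    rw [map_mul, aeval_C, algebraMap_eq]
  rw [← aeval_range, algebraicIndependent_iff]
  constructor
  · intro hsat Q₀ hQ₀
    obtain ⟨Q, rfl⟩ := map_surjective φ hφ Q₀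
    obtain ⟨h, hQ⟩ : C π ∣ aeval f Q := by
      rwa [C_dvd_iff_map_hom_eq_zero φ π hker, map_aeval_eq_aeval_map]
    obtain ⟨P, hP⟩ := (AlgHom.mem_range _).mp (hsat h ⟨Q, hQ⟩)
    have hQP : Q = C π * P := by
      rw [← sub_eq_zero]
      refine algebraicIndependent_iff.mp hf _ ?_
      rw [map_sub, haeval_C, hP, hQ, sub_self]
    rw [← C_dvd_iff_map_hom_eq_zero φ π hker, hQP]
    exact dvd_mul_right _ _
  · intro hind h hh
    obtain ⟨Q, hQ⟩ := (AlgHom.mem_range _).mp hh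
    obtain ⟨Q', rfl⟩ : C π ∣ Q := by
      rw [C_dvd_iff_map_hom_eq_zero φ π hker]
      refine hind _ ?_
      rw [← map_aeval_eq_aeval_map, hQ, ← C_dvd_iff_map_hom_eq_zero φ π hker]
      exact dvd_mul_right _ _
    exact ⟨Q', mul_left_cancel₀ hCπ ((haeval_C Q').symm.trans hQ)⟩

open scoped nonZeroDivisors in
theorem exists_C_mul_mem_adjoin_of_map_mem_adjoin {K ι : Type*} [CommRing K] [Algebra R K]
    [IsFractionRing R K] {f : ι → MvPolynomial σ R} {h : MvPolynomial σ R}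
    (hh : map (algebraMap R K) h ∈
      Algebra.adjoin K (Set.range fun i => map (algebraMap R K) (f i))) :
    ∃ b ∈ R⁰, C b * h ∈ Algebra.adjoin R (Set.range f) := by
  let _ : Algebra (MvPolynomial ι R) (MvPolynomial ι K) :=
    algebraMvPolynomial
  rw [← aeval_range] at hh ⊢
  obtain ⟨P, hP⟩ := (AlgHom.mem_range _).mp hh
  obtain ⟨⟨Q, c⟩, hQ⟩ := IsLocalization.surj (R⁰.map (C (σ := ι))) P
  obtain ⟨b, hb, hbc⟩ := Submonoid.mem_map.mp c.2
  refine ⟨b, hb, (AlgHom.mem_range _).mpr ⟨Q, map_injective _ (IsFractionRing.injective R K) ?_⟩⟩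
  rw [algebraMap_def, ← hbc] at hQ
  rw [map_aeval_eq_aeval_map, ← hQ, map_mul, map_mul, map_C, hP, map_C, aeval_C,
    algebraMap_eq, mul_comm]

end Saturation

theorem stmt11_general {R : Type*} [CommRing R] [IsDomain R] [IsDiscreteValuationRing R] {n : ℕ}
    {G : Type*} [Group G]
    (ρ : G →* Matrix.GeneralLinearGroup (Fin n) R)
    (f : Fin n → MvPolynomial (Fin n) R)
    (hmem : ∀ i, f i ∈ invariantRing ρ)
    (hind : AlgebraicIndependent R f)
    (hK : invariantRing
        ((Matrix.GeneralLinearGroup.map (algebraMap R (FractionRing R))).comp ρ) =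
      Algebra.adjoin (FractionRing R)
        (Set.range fun i => MvPolynomial.map (algebraMap R (FractionRing R)) (f i))) :
    invariantRing ρ = Algebra.adjoin R (Set.range f) ↔
      AlgebraicIndependent (IsLocalRing.ResidueField R)
        (fun i => MvPolynomial.map (IsLocalRing.residue R) (f i)) := by
  obtain ⟨π, hπ⟩ := IsDiscreteValuationRing.exists_irreducible R
  have hker (r : R) : IsLocalRing.residue R r = 0 ↔ π ∣ r := by
    rw [IsLocalRing.residue_eq_zero_iff, hπ.maximalIdeal_eq, Ideal.mem_span_singleton]
  rw [← isSaturatedBy_adjoin_iff IsLocalRing.residue_surjective hker hπ.ne_zero hind]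
  refine ⟨fun hEq => hEq ▸ invariantRing_isSaturatedBy ρ hπ.ne_zero, fun hsat => ?_⟩
  refine le_antisymm (fun h hh => ?_) (Algebra.adjoin_le (Set.range_subset_iff.mpr hmem))
  have hhK := map_mem_invariantRing (algebraMap R (FractionRing R)) hh
  rw [hK] at hhK
  obtain ⟨b, hb, hbh⟩ := exists_C_mul_mem_adjoin_of_map_mem_adjoin hhK
  exact hsat.mem_of_C_mul_mem hπ (nonZeroDivisors.coe_ne_zero ⟨b, hb⟩) hbh

/-- Over a DVR `R` with fraction field `K` and residue field `F`: if homogeneous invariants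
`f_1,…,f_n` generate `K[x]^G`, then they generate `R[x]^G` iff their reductions mod `π` are
algebraically independent over `F`. -/
theorem stmt11 {R : Type*} [CommRing R] [IsDomain R] [IsDiscreteValuationRing R] {n : ℕ}
    {G : Type*} [Group G] [Finite G]
    (ρ : G →* Matrix.GeneralLinearGroup (Fin n) R)
    (f : Fin n → MvPolynomial (Fin n) R) (d : Fin n → ℕ)
    (hmem : ∀ i, f i ∈ invariantRing ρ)
    (hhom : ∀ i, (f i).IsHomogeneous (d i))
    (hind : AlgebraicIndependent R f)
    (hK : invariantRing
        ((Matrix.GeneralLinearGroup.map (algebraMap R (FractionRing R))).comp ρ) =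
      Algebra.adjoin (FractionRing R)
        (Set.range fun i => MvPolynomial.map (algebraMap R (FractionRing R)) (f i))) :
    invariantRing ρ = Algebra.adjoin R (Set.range f) ↔
      AlgebraicIndependent (IsLocalRing.ResidueField R)
        (fun i => MvPolynomial.map (IsLocalRing.residue R) (f i)) :=
  stmt11_general ρ f hmem hind hK
end

section
/- Let F = 𝔽_3 and let G = S_3 act on F[x,y] via the reduction mod 3 of the representation sending (1 2) ↦ [[1,0],[0,−1]] and (2 3) ↦ [[−2,0],[1,2]] (the mod-3 reductions of [[1,3],[0,−1]] and [[−2,−3],[1,2]]). Then the invariant ring F[x,y]^G is the polynomial ring F[f', g'] with f' = x and g' = x⁴y² + x²y⁴ + y⁶. -/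
open MvPolynomial

/-- The matrix `[[1,0],[0,-1]]` over `𝔽₃`, the mod-3 reduction of `[[1,3],[0,-1]]`. -/
def N1 : Matrix.GeneralLinearGroup (Fin 2) (ZMod 3) :=
  ⟨!![1, 0; 0, -1], !![1, 0; 0, -1], by decide, by decide⟩

/-- The matrix `[[-2,0],[1,2]]` over `𝔽₃`, the mod-3 reduction of `[[-2,-3],[1,2]]`. -/
def N2 : Matrix.GeneralLinearGroup (Fin 2) (ZMod 3) :=
  ⟨!![-2, 0; 1, 2], !![-2, 0; 1, 2], by decide, by decide⟩

/-!
Write `x = X 0`, `y = X 1` and view `𝔽₃[x, y]` as `A[y]` with `A = 𝔽₃[x]`. The two generators act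
by `y ↦ -y` and `y ↦ x - y` and fix `x`, so the invariants are the `p ∈ A[y]` fixed by the affine
substitutions `y ↦ ±y + c x`, `c ∈ 𝔽₃`. Both generators negate `h = y³ - x²y = ∏_c (y - c x)`, so
`h² = x⁴y² + x²y⁴ + y⁶` is invariant, monic of degree 6 in `y`. Conversely, if `p` is invariant
of `y`-degree `d`, then `d` is even (from `y ↦ -y`), and comparing the coefficients of `y^(d-1)`
in `p(y + x) = p(y)` gives `d · x · lc(p) = 0`, so `3 ∣ d`. Thus `6 ∣ d`, and subtracting
`lc(p) · (h²)^(d/6)` lowers the degree.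
-/

section Invariants

variable {R : Type*} [CommRing R] {n : ℕ}

theorem gAct_one : gAct (1 : Matrix.GeneralLinearGroup (Fin n) R) = AlgHom.id R _ := by
  ext i
  simp [gAct, Matrix.one_apply]

theorem gAct_mul (M N : Matrix.GeneralLinearGroup (Fin n) R) :
    gAct (M * N) = (gAct M).comp (gAct N) := by
  ext i
  simp only [gAct, AlgHom.comp_apply, aeval_X, map_sum, map_mul, aeval_C, mul_inv_rev,
    Units.val_mul, Matrix.mul_apply, Finset.sum_mul, Finset.mul_sum, mul_assoc,
    MvPolynomial.algebraMap_eq]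
  rw [Finset.sum_comm]

theorem mem_invariantRing_iff_of_closure_eq_top {G : Type*} [Group G]
    (ρ : G →* Matrix.GeneralLinearGroup (Fin n) R) {s : Set G} (hs : Submonoid.closure s = ⊤)
    (f : MvPolynomial (Fin n) R) :
    f ∈ invariantRing ρ ↔ ∀ g ∈ s, gAct (ρ g) f = f := by
  simp only [invariantRing, Algebra.mem_iInf, AlgHom.mem_equalizer, AlgHom.id_apply]
  refine ⟨fun h g _ => h g, fun h g => ?_⟩
  induction (hs ▸ Submonoid.mem_top g : g ∈ Submonoid.closure s) using
    Submonoid.closure_induction with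
  | mem g hg => exact h g hg
  | one => rw [map_one, gAct_one, AlgHom.id_apply]
  | mul g g' _ _ hg hg' => rw [map_mul, gAct_mul, AlgHom.comp_apply, hg', hg]

end Invariants

namespace Polynomial

variable {R : Type*} [CommRing R]

theorem le_adjoin_singleton_of_natDegree_dvd {S : Subalgebra R R[X]} {G : R[X]} (hG : G.Monic)
    (hGS : G ∈ S) (hdvd : ∀ p ∈ S, G.natDegree ∣ p.natDegree) :
    S ≤ Algebra.adjoin R {G} := by
  intro p hp
  induction hn : p.natDegree using Nat.strong_induction_on generalizing p with
  | _ n ih =>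
  rcases eq_or_ne n 0 with rfl | hn0
  · rw [eq_C_of_natDegree_eq_zero hn]
    exact Subalgebra.algebraMap_mem _ _
  have hp0 : p ≠ 0 := by rintro rfl; exact hn0 (hn ▸ natDegree_zero)
  obtain ⟨k, hk⟩ := hdvd p hp
  set q := C p.leadingCoeff * G ^ k
  have hq_lc : q.leadingCoeff = p.leadingCoeff := by
    rw [leadingCoeff_mul_monic (hG.pow k), leadingCoeff_C]
  have hq0 : q ≠ 0 := by
    rw [← leadingCoeff_ne_zero, hq_lc]; exact leadingCoeff_ne_zero.mpr hp0
  have hq_deg : q.degree = p.degree := by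
    rw [degree_eq_natDegree hq0, degree_eq_natDegree hp0, natDegree_C_mul_of_mul_ne_zero
      (by rwa [(hG.pow k).leadingCoeff, mul_one, leadingCoeff_ne_zero]), hG.natDegree_pow, hk,
      mul_comm]
  have hq_adj : q ∈ Algebra.adjoin R {G} :=
    mul_mem (Subalgebra.algebraMap_mem _ _) (pow_mem (Algebra.self_mem_adjoin_singleton R G) k)
  have hlt : (p - q).natDegree < n := by
    rcases eq_or_ne (p - q) 0 with h | h
    · rw [h, natDegree_zero]; exact Nat.pos_of_ne_zero hn0
    · exact hn ▸ natDegree_lt_natDegree h (degree_sub_lt_left hq_deg.symm hp0 hq_lc.symm)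
  have hpq : p - q ∈ S := sub_mem hp (mul_mem (Subalgebra.algebraMap_mem _ _) (pow_mem hGS k))
  exact sub_add_cancel p q ▸ add_mem (ih _ hlt hpq rfl) hq_adj

theorem even_natDegree_of_comp_neg_X_eq [NoZeroDivisors R] (h2 : (2 : R) ≠ 0) {p : R[X]}
    (hp : p.comp (-X) = p) : Even p.natDegree := by
  rcases eq_or_ne p 0 with rfl | hp0
  · simp
  have : Nontrivial R := ⟨⟨2, 0, h2⟩⟩
  have hlc := leadingCoeff_comp (p := p) (q := -X) (by simp)
  rw [hp, leadingCoeff_neg, leadingCoeff_X] at hlc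
  by_contra hodd
  rw [Nat.not_even_iff_odd.mp hodd |>.neg_one_pow, mul_neg_one, eq_neg_iff_add_eq_zero,
    ← two_mul] at hlc
  exact mul_ne_zero h2 (leadingCoeff_ne_zero.mpr hp0) hlc

theorem coeff_taylor_natDegree_sub_one (p : R[X]) (r : R) :
    (taylor r p).coeff (p.natDegree - 1) =
      p.coeff (p.natDegree - 1) + p.natDegree * p.leadingCoeff * r := by
  rcases Nat.eq_zero_or_pos p.natDegree with hd | hd
  · rw [hd, eq_C_of_natDegree_eq_zero hd]
    simp
  have hq : (hasseDeriv (p.natDegree - 1) p).natDegree < 2 :=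
    (natDegree_hasseDeriv_le p _).trans_lt (by omega : p.natDegree - (p.natDegree - 1) < 2)
  have hchoose : p.natDegree.choose (p.natDegree - 1) = p.natDegree := by
    rw [Nat.choose_symm_of_eq_add (by omega : p.natDegree = p.natDegree - 1 + 1),
      Nat.choose_one_right]
  rw [taylor_coeff, eval_eq_sum_range' hq, Finset.sum_range_succ, Finset.sum_range_one,
    hasseDeriv_coeff, hasseDeriv_coeff, Nat.add_sub_cancel' hd, hchoose]
  simp only [zero_add, Nat.choose_self, Nat.cast_one, one_mul, pow_zero, mul_one,
    coeff_natDegree, pow_one]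

theorem natCast_natDegree_eq_zero_of_taylor_eq [IsDomain R] {p : R[X]} {r : R} (hr : r ≠ 0)
    (h : taylor r p = p) : (p.natDegree : R) = 0 := by
  rcases eq_or_ne p 0 with rfl | hp0
  · simp
  have := coeff_taylor_natDegree_sub_one p r
  rw [h, left_eq_add, mul_eq_zero, mul_eq_zero] at this
  exact (this.resolve_right hr).resolve_right (leadingCoeff_ne_zero.mpr hp0)

noncomputable def affineInvariants (u : R) : Subalgebra R R[X] :=
  AlgHom.equalizer (aeval (-X)) (AlgHom.id R R[X]) ⊓
    AlgHom.equalizer (aeval (C u - X)) (AlgHom.id R R[X])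

theorem mem_affineInvariants {u : R} {p : R[X]} :
    p ∈ affineInvariants u ↔ p.comp (-X) = p ∧ p.comp (C u - X) = p := by
  simp [affineInvariants, AlgHom.mem_equalizer, comp_eq_aeval]

theorem taylor_eq_self_of_mem_affineInvariants {u : R} {p : R[X]}
    (hp : p ∈ affineInvariants u) : taylor u p = p := by
  obtain ⟨hneg, htr⟩ := mem_affineInvariants.mp hp
  have : X + C u = (C u - X).comp (-X) := by simp [add_comm]
  rw [taylor_apply, this, ← comp_assoc, htr, hneg]

theorem cubic_comp_neg_X (u : R) :
    (X ^ 3 - C u ^ 2 * X).comp (-X) = -(X ^ 3 - C u ^ 2 * X) := by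
  simp only [sub_comp, pow_comp, mul_comp, C_comp, X_comp]
  ring

theorem cubic_comp_C_sub_X [CharP R 3] (u : R) :
    (X ^ 3 - C u ^ 2 * X).comp (C u - X) = -(X ^ 3 - C u ^ 2 * X) := by
  have h3 : (3 : R[X]) = 0 := CharP.cast_eq_zero R[X] 3
  simp only [sub_comp, pow_comp, mul_comp, C_comp, X_comp]
  linear_combination (C u * X ^ 2 - C u ^ 2 * X) * h3

theorem sq_cubic_eq_of_charP_three [CharP R 3] (u : R) :
    (X ^ 3 - C u ^ 2 * X) ^ 2 = C u ^ 4 * X ^ 2 + C u ^ 2 * X ^ 4 + X ^ 6 := by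
  have h3 : (3 : R[X]) = 0 := CharP.cast_eq_zero R[X] 3
  linear_combination (- C u ^ 2 * X ^ 4) * h3

theorem sq_cubic_mem_affineInvariants [CharP R 3] (u : R) :
    (X ^ 3 - C u ^ 2 * X) ^ 2 ∈ affineInvariants u :=
  mem_affineInvariants.mpr ⟨by rw [pow_comp, cubic_comp_neg_X, neg_sq],
    by rw [pow_comp, cubic_comp_C_sub_X, neg_sq]⟩

theorem affineInvariants_eq_adjoin [IsDomain R] [CharP R 3] {u : R} (hu : u ≠ 0) :
    affineInvariants u = Algebra.adjoin R {(X ^ 3 - C u ^ 2 * X) ^ 2} := by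
  have hG : ((X ^ 3 - C u ^ 2 * X) ^ 2).Monic := by monicity!
  have hdeg : ((X ^ 3 - C u ^ 2 * X) ^ 2).natDegree = 2 * 3 := by compute_degree!
  refine le_antisymm (le_adjoin_singleton_of_natDegree_dvd hG (sq_cubic_mem_affineInvariants u)
    fun p hp => hdeg ▸ ?_) (Algebra.adjoin_le (by simpa using sq_cubic_mem_affineInvariants u))
  have h2 : (2 : R) ≠ 0 := by
    simpa using (CharP.cast_eq_zero_iff R 3 2).not.mpr (by norm_num)
  have heven := even_natDegree_of_comp_neg_X_eq h2 (mem_affineInvariants.mp hp).1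
  have hthree := (CharP.cast_eq_zero_iff R 3 _).mp
    (natCast_natDegree_eq_zero_of_taylor_eq hu (taylor_eq_self_of_mem_affineInvariants hp))
  exact Nat.Coprime.mul_dvd_of_dvd_of_dvd (by norm_num) heven.two_dvd hthree

end Polynomial

open Polynomial in
noncomputable def equivPolynomialY :
    MvPolynomial (Fin 2) (ZMod 3) ≃ₐ[ZMod 3] (MvPolynomial (Fin 1) (ZMod 3))[X] :=
  (renameEquiv (ZMod 3) (Equiv.swap 0 1)).trans (finSuccEquiv (ZMod 3) 1)

theorem equivPolynomialY_X_zero : equivPolynomialY (X 0) = Polynomial.C (X 0) := by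
  simpa [equivPolynomialY] using finSuccEquiv_X_succ (R := ZMod 3) (j := (0 : Fin 1))

theorem equivPolynomialY_X_one : equivPolynomialY (X 1) = Polynomial.X := by
  simpa [equivPolynomialY] using finSuccEquiv_X_zero (R := ZMod 3) (n := 1)

theorem equivPolynomialY_gAct_N1 (f : MvPolynomial (Fin 2) (ZMod 3)) :
    equivPolynomialY (gAct N1 f) = (equivPolynomialY f).comp (-Polynomial.X) := by
  suffices equivPolynomialY.toAlgHom.comp (gAct N1) =
      ((Polynomial.aeval (-Polynomial.X)).restrictScalars (ZMod 3)).comp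
        equivPolynomialY.toAlgHom by
    simpa [Polynomial.comp_eq_aeval] using congr($this f)
  have hinv :
      ((N1⁻¹ : Matrix.GeneralLinearGroup (Fin 2) (ZMod 3)) : Matrix (Fin 2) (Fin 2) (ZMod 3)) =
      !![1, 0; 0, -1] := rfl
  refine algHom_ext fun i => ?_
  fin_cases i <;>
    simp [gAct, hinv, Fin.sum_univ_two, equivPolynomialY_X_zero, equivPolynomialY_X_one]

theorem equivPolynomialY_gAct_N2 (f : MvPolynomial (Fin 2) (ZMod 3)) :
    equivPolynomialY (gAct N2 f) =
      (equivPolynomialY f).comp (Polynomial.C (X 0) - Polynomial.X) := by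
  suffices equivPolynomialY.toAlgHom.comp (gAct N2) =
      ((Polynomial.aeval (Polynomial.C (X 0) - Polynomial.X)).restrictScalars (ZMod 3)).comp
        equivPolynomialY.toAlgHom by
    simpa [Polynomial.comp_eq_aeval] using congr($this f)
  have hinv :
      ((N2⁻¹ : Matrix.GeneralLinearGroup (Fin 2) (ZMod 3)) : Matrix (Fin 2) (Fin 2) (ZMod 3)) =
      !![1, 0; 1, -1] := rfl
  refine algHom_ext fun i => ?_
  fin_cases i <;>
    simp [gAct, hinv, Fin.sum_univ_two, equivPolynomialY_X_zero, equivPolynomialY_X_one,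
      sub_eq_add_neg]

theorem mem_invariantRing_iff_mem_affineInvariants
    (ρ : Equiv.Perm (Fin 3) →* Matrix.GeneralLinearGroup (Fin 2) (ZMod 3))
    (h12 : ρ (Equiv.swap 0 1) = N1) (h23 : ρ (Equiv.swap 1 2) = N2)
    (f : MvPolynomial (Fin 2) (ZMod 3)) :
    f ∈ invariantRing ρ ↔ equivPolynomialY f ∈ Polynomial.affineInvariants (X 0) := by
  rw [mem_invariantRing_iff_of_closure_eq_top ρ (Equiv.Perm.mclosure_swap_castSucc_succ 2),
    Polynomial.mem_affineInvariants, ← equivPolynomialY_gAct_N1, ← equivPolynomialY_gAct_N2,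
    equivPolynomialY.injective.eq_iff, equivPolynomialY.injective.eq_iff, ← h12, ← h23]
  simp [or_imp, forall_and, forall_eq']

theorem MvPolynomial.adjoin_X_zero_fin_one (R : Type*) [CommSemiring R] :
    Algebra.adjoin R {(X 0 : MvPolynomial (Fin 1) R)} = ⊤ := by
  rw [← adjoin_range_X, Set.range_unique]
  rfl

theorem equivPolynomialY_sextic :
    equivPolynomialY (X 0 ^ 4 * X 1 ^ 2 + X 0 ^ 2 * X 1 ^ 4 + X 1 ^ 6) =
      (Polynomial.X ^ 3 - Polynomial.C (X 0) ^ 2 * Polynomial.X) ^ 2 := by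
  simp only [map_add, map_mul, map_pow, equivPolynomialY_X_zero, equivPolynomialY_X_one,
    Polynomial.sq_cubic_eq_of_charP_three]

/-- For the `S₃`-representation over `𝔽₃` sending `(1 2) ↦ [[1,0],[0,-1]]` and
`(2 3) ↦ [[-2,0],[1,2]]`, the ring of invariants is the polynomial ring
`𝔽₃[x, x⁴y² + x²y⁴ + y⁶]`. -/
theorem stmt19 (ρ : Equiv.Perm (Fin 3) →* Matrix.GeneralLinearGroup (Fin 2) (ZMod 3))
    (h12 : ρ (Equiv.swap 0 1) = N1) (h23 : ρ (Equiv.swap 1 2) = N2) :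
    invariantRing ρ =
      Algebra.adjoin (ZMod 3)
        {(X 0 : MvPolynomial (Fin 2) (ZMod 3)),
          X 0 ^ 4 * X 1 ^ 2 + X 0 ^ 2 * X 1 ^ 4 + X 1 ^ 6} := by
  let ψ := equivPolynomialY.toAlgHom
  calc invariantRing ρ
      = ((Polynomial.affineInvariants (X 0)).restrictScalars (ZMod 3)).comap ψ := by
        ext f; exact mem_invariantRing_iff_mem_affineInvariants ρ h12 h23 f
    _ = (Algebra.adjoin (ZMod 3)
          (ψ '' {X 0, X 0 ^ 4 * X 1 ^ 2 + X 0 ^ 2 * X 1 ^ 4 + X 1 ^ 6})).comap ψ := by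
        rw [Polynomial.affineInvariants_eq_adjoin (X_ne_zero 0),
          Algebra.adjoin_eq_adjoin_union (ZMod 3) _ _ (adjoin_X_zero_fin_one _),
          Set.image_singleton, Set.singleton_union, Set.image_pair]
        simp [ψ, equivPolynomialY_X_zero, equivPolynomialY_sextic]
    _ = _ := by
        rw [Algebra.adjoin_image,
          Subalgebra.comap_map_eq_self_of_injective equivPolynomialY.injective]
end
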